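/- Let d ≥ 2 be an integer. There exists a constant c > 0 (depending only on d) such that for all polynomials f, g, h ∈ ℂ[x] with f = g∘h, deg f = d, h(0) = 0, and H(h) ≥ 1, one has H(g) ≤ c·H(f). -/

import Mathlib

open Polynomial

/-- The height of a complex polynomial: the maximum of the absolute values of its
coefficients. -/
noncomputable def cheight (f : ℂ[X]) : ℝ :=
  (Finset.range (f.natDegree + 1)).sup' (by simp) fun i => ‖f.coeff i‖

/-!
With `μ = H(h) ≥ 1` we have `g ∘ h = g(μX) ∘ (h / μ)` and `H(g(μX)) ≥ H(g)`; dividing `g(μX)` by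
its height as well, both factors get height one. On the compact set of pairs `(p, q)` of
polynomials of degree at most `d` and height one with `q(0) = 0`, the height of `p ∘ q` is a
continuous function of the coefficients, and it is positive since `q` is nonconstant. Its
minimum `ε > 0` gives `H(g) ≤ ε⁻¹ H(f)`.
-/

section ContinuousCoeff

variable {R : Type*} [Semiring R] [TopologicalSpace R] {T : Type*} [TopologicalSpace T]
  {p q : T → R[X]}

theorem Polynomial.continuous_coeff_ofFn [DecidableEq R] (n i : ℕ) :
    Continuous fun v : Fin n → R => (ofFn n v).coeff i := by
  by_cases hi : i < n
  · simpa only [ofFn_coeff_eq_val_of_lt _ hi] using continuous_apply _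
  · simpa only [ofFn_coeff_eq_zero_of_ge _ (not_lt.1 hi)] using continuous_const

theorem Polynomial.continuous_toFn (hp : ∀ i, Continuous fun t => (p t).coeff i) (n : ℕ) :
    Continuous fun t => toFn n (p t) :=
  continuous_pi fun i => hp i

variable [IsTopologicalSemiring R]

theorem Polynomial.continuous_coeff_mul (hp : ∀ i, Continuous fun t => (p t).coeff i)
    (hq : ∀ i, Continuous fun t => (q t).coeff i) (i : ℕ) :
    Continuous fun t => (p t * q t).coeff i := by
  simp only [coeff_mul]
  exact continuous_finsetSum _ fun x _ => (hp x.1).mul (hq x.2)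

theorem Polynomial.continuous_coeff_pow (hp : ∀ i, Continuous fun t => (p t).coeff i) (n : ℕ) :
    ∀ i, Continuous fun t => (p t ^ n).coeff i := by
  induction n with
  | zero => simpa only [pow_zero] using fun i => continuous_const
  | succ n ih => simpa only [pow_succ] using continuous_coeff_mul ih hp

theorem Polynomial.continuous_coeff_comp {N : ℕ} (hpN : ∀ t, (p t).natDegree < N)
    (hp : ∀ i, Continuous fun t => (p t).coeff i) (hq : ∀ i, Continuous fun t => (q t).coeff i)
    (i : ℕ) : Continuous fun t => ((p t).comp (q t)).coeff i := by
  have hcomp (t : T) : ((p t).comp (q t)).coeff i =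
      ∑ j ∈ Finset.range N, (p t).coeff j * (q t ^ j).coeff i := by
    rw [comp, eval₂_eq_sum_range' C (hpN t), finsetSum_coeff]
    simp only [coeff_C_mul]
  simp only [hcomp]
  exact continuous_finsetSum _ fun j _ => (hp j).mul (continuous_coeff_pow hq j i)

end ContinuousCoeff

theorem cheight_nonneg (f : ℂ[X]) : 0 ≤ cheight f :=
  (norm_nonneg _).trans <|
    Finset.le_sup' (fun i => ‖f.coeff i‖) (Finset.mem_range.2 f.natDegree.succ_pos)

theorem norm_coeff_le_cheight (f : ℂ[X]) (i : ℕ) : ‖f.coeff i‖ ≤ cheight f := by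
  rcases le_or_gt i f.natDegree with hi | hi
  · exact Finset.le_sup' (fun i => ‖f.coeff i‖) (Finset.mem_range_succ_iff.2 hi)
  · simpa [coeff_eq_zero_of_natDegree_lt hi] using cheight_nonneg f

theorem norm_toFn_eq_cheight {n : ℕ} {f : ℂ[X]} (hf : f.natDegree < n) :
    ‖toFn n f‖ = cheight f := by
  refine le_antisymm ((pi_norm_le_iff_of_nonneg (cheight_nonneg f)).2 fun i =>
    norm_coeff_le_cheight f i) (Finset.sup'_le _ _ fun i hi => ?_)
  have hin : i < n := (Finset.mem_range_succ_iff.1 hi).trans_lt hf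
  exact norm_le_pi_norm (toFn n f) ⟨i, hin⟩

theorem cheight_smul (c : ℂ) (f : ℂ[X]) : cheight (c • f) = ‖c‖ * cheight f := by
  have hdeg : (c • f).natDegree < f.natDegree + 1 :=
    (natDegree_smul_le c f).trans_lt f.natDegree.lt_succ_self
  rw [← norm_toFn_eq_cheight hdeg, ← norm_toFn_eq_cheight f.natDegree.lt_succ_self, map_smul,
    norm_smul]

theorem cheight_pos {f : ℂ[X]} (hf : f ≠ 0) : 0 < cheight f :=
  (norm_pos_iff.2 (leadingCoeff_ne_zero.2 hf)).trans_le (norm_coeff_le_cheight f _)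

theorem cheight_le_cheight_comp_C_mul_X (g : ℂ[X]) {μ : ℂ} (hμ : 1 ≤ ‖μ‖) :
    cheight g ≤ cheight (g.comp (C μ * X)) :=
  Finset.sup'_le _ _ fun i _ => calc
    ‖g.coeff i‖ ≤ ‖g.coeff i‖ * ‖μ‖ ^ i := le_mul_of_one_le_right (norm_nonneg _) (one_le_pow₀ hμ)
    _ = ‖(g.comp (C μ * X)).coeff i‖ := by rw [comp_C_mul_X_coeff, norm_mul, norm_pow]
    _ ≤ _ := norm_coeff_le_cheight _ i

theorem cheight_zero : cheight 0 = 0 := by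
  simp [cheight]

theorem ne_zero_of_one_le_cheight {f : ℂ[X]} (hf : 1 ≤ cheight f) : f ≠ 0 := by
  rintro rfl
  norm_num [cheight_zero] at hf

theorem norm_cheight (f : ℂ[X]) : ‖(cheight f : ℂ)‖ = cheight f :=
  Complex.norm_of_nonneg (cheight_nonneg f)

theorem cheight_inv_smul_self {f : ℂ[X]} (hf : f ≠ 0) : cheight ((cheight f : ℂ)⁻¹ • f) = 1 := by
  rw [cheight_smul, norm_inv, norm_cheight, inv_mul_cancel₀ (cheight_pos hf).ne']

theorem cheight_comp_pos {p q : ℂ[X]} (hp : p ≠ 0) (hq : q ≠ 0) (hq0 : q.coeff 0 = 0) :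
    0 < cheight (p.comp q) := by
  refine cheight_pos fun h0 => ?_
  rcases comp_eq_zero_iff.1 h0 with h | ⟨-, h⟩
  · exact hp h
  · exact hq (by rw [h, hq0, map_zero])

theorem continuous_cheight_comp_ofFn (d : ℕ) :
    Continuous fun x : (Fin (d + 1) → ℂ) × (Fin (d + 1) → ℂ) =>
      cheight ((ofFn (d + 1) x.1).comp (ofFn (d + 1) x.2)) := by
  have hdeg (v : Fin (d + 1) → ℂ) : (ofFn (d + 1) v).natDegree ≤ d :=
    Nat.le_of_lt_succ (ofFn_natDegree_lt d.succ_pos v)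
  have hcoeff : Continuous fun x : (Fin (d + 1) → ℂ) × (Fin (d + 1) → ℂ) =>
      toFn (d * d + 1) ((ofFn (d + 1) x.1).comp (ofFn (d + 1) x.2)) :=
    continuous_toFn (continuous_coeff_comp
      (p := fun x : (Fin (d + 1) → ℂ) × (Fin (d + 1) → ℂ) => ofFn (d + 1) x.1)
      (q := fun x : (Fin (d + 1) → ℂ) × (Fin (d + 1) → ℂ) => ofFn (d + 1) x.2)
      (fun x => Nat.lt_succ_of_le (hdeg x.1))
      (fun j => (continuous_coeff_ofFn _ j).comp continuous_fst)
      (fun j => (continuous_coeff_ofFn _ j).comp continuous_snd)) _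
  refine (continuous_norm.comp hcoeff).congr fun x => norm_toFn_eq_cheight ?_
  exact natDegree_comp_le.trans_lt (Nat.lt_succ_of_le (Nat.mul_le_mul (hdeg _) (hdeg _)))

theorem exists_pos_le_cheight_comp (d : ℕ) :
    ∃ ε > 0, ∀ p q : ℂ[X], p.natDegree ≤ d → q.natDegree ≤ d → cheight p = 1 → cheight q = 1 →
      q.coeff 0 = 0 → ε ≤ cheight (p.comp q) := by
  let K : Set ((Fin (d + 1) → ℂ) × (Fin (d + 1) → ℂ)) :=
    Metric.sphere 0 1 ×ˢ Metric.sphere 0 1 ∩ {x | x.2 0 = 0}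
  have hK : IsCompact K := ((isCompact_sphere 0 1).prod (isCompact_sphere 0 1)).inter_right
    (isClosed_eq ((continuous_apply 0).comp continuous_snd) continuous_const)
  have hpos : ∀ x ∈ K, 0 < cheight ((ofFn (d + 1) x.1).comp (ofFn (d + 1) x.2)) := by
    rintro ⟨a, b⟩ ⟨⟨ha, hb⟩, hb0⟩
    have hofFn_ne {v : Fin (d + 1) → ℂ} (hv : v ∈ Metric.sphere 0 1) : ofFn (d + 1) v ≠ 0 :=
      (map_ne_zero_iff _ (injective_ofFn _)).2 (ne_zero_of_mem_unit_sphere ⟨v, hv⟩)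
    exact cheight_comp_pos (hofFn_ne ha) (hofFn_ne hb)
      ((ofFn_coeff_eq_val_of_lt _ d.succ_pos).trans hb0)
  obtain ⟨ε, hε, hεK⟩ :=
    hK.exists_forall_le' (continuous_cheight_comp_ofFn d).continuousOn hpos
  refine ⟨ε, hε, fun p q hp hq hp1 hq1 hq0 => ?_⟩
  have hmem : (toFn (d + 1) p, toFn (d + 1) q) ∈ K := by
    refine ⟨⟨?_, ?_⟩, hq0⟩
    · rw [mem_sphere_zero_iff_norm, norm_toFn_eq_cheight (Nat.lt_succ_of_le hp), hp1]
    · rw [mem_sphere_zero_iff_norm, norm_toFn_eq_cheight (Nat.lt_succ_of_le hq), hq1]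
  have := hεK _ hmem
  rwa [ofFn_comp_toFn_eq_id_of_natDegree_lt (Nat.lt_succ_of_le hp),
    ofFn_comp_toFn_eq_id_of_natDegree_lt (Nat.lt_succ_of_le hq)] at this

theorem exists_pos_mul_cheight_le_cheight_comp (d : ℕ) :
    ∃ ε > 0, ∀ g h : ℂ[X], g.natDegree ≤ d → h.natDegree ≤ d → h.coeff 0 = 0 → 1 ≤ cheight h →
      ε * cheight g ≤ cheight (g.comp h) := by
  obtain ⟨ε, hε, hεpq⟩ := exists_pos_le_cheight_comp d
  refine ⟨ε, hε, fun g h hg hh h0 hh1 => ?_⟩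
  rcases eq_or_ne g 0 with rfl | hg0
  · simp [cheight_zero]
  have hh0 := ne_zero_of_one_le_cheight hh1
  set μ : ℂ := (cheight h : ℂ) with hμ
  have hμ0 : μ ≠ 0 := Complex.ofReal_ne_zero.2 (cheight_pos hh0).ne'
  set g' := g.comp (C μ * X)
  have hg'0 : g' ≠ 0 := (comp_C_mul_X_eq_zero_iff (mem_nonZeroDivisors_of_ne_zero hμ0)).not.2 hg0
  set ν : ℂ := (cheight g' : ℂ)
  have hcomp : (ν⁻¹ • g').comp (μ⁻¹ • h) = ν⁻¹ • g.comp h := by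
    rw [smul_comp, comp_assoc, mul_comp, C_comp, X_comp, ← smul_eq_C_mul, smul_smul,
      mul_inv_cancel₀ hμ0, one_smul]
  have key := hεpq (ν⁻¹ • g') (μ⁻¹ • h)
    ((natDegree_smul_le _ _).trans (natDegree_comp_le.trans (by
      rw [natDegree_C_mul_X _ hμ0, mul_one]; exact hg)))
    ((natDegree_smul_le _ _).trans hh) (cheight_inv_smul_self hg'0) (cheight_inv_smul_self hh0)
    (by rw [coeff_smul, h0, smul_zero])
  rw [hcomp, cheight_smul, norm_inv, norm_cheight, le_inv_mul_iff₀ (cheight_pos hg'0)] at key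
  calc ε * cheight g ≤ ε * cheight g' := by
        gcongr
        exact cheight_le_cheight_comp_C_mul_X g (by rwa [hμ, norm_cheight])
    _ ≤ cheight (g.comp h) := by rwa [mul_comm]

theorem stmt_15 (d : ℕ) (hd : 2 ≤ d) :
    ∃ c : ℝ, 0 < c ∧ ∀ (f g h : ℂ[X]), f = g.comp h → f.natDegree = d →
      h.eval 0 = 0 → 1 ≤ cheight h →
      cheight g ≤ c * cheight f := by
  obtain ⟨ε, hε, hεgh⟩ := exists_pos_mul_cheight_le_cheight_comp d
  refine ⟨ε⁻¹, inv_pos.2 hε, fun f g h hf hdeg h0 hh => ?_⟩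
  rw [← coeff_zero_eq_eval_zero] at h0
  have hh_pos : 0 < h.natDegree := Nat.pos_of_ne_zero fun hh' => ne_zero_of_one_le_cheight hh <| by
    rw [eq_C_of_natDegree_eq_zero hh', h0, map_zero]
  have hmul : g.natDegree * h.natDegree = d := by rw [← hdeg, hf, natDegree_comp]
  have hg_pos : 0 < g.natDegree := Nat.pos_of_ne_zero fun hg' => by
    rw [hg', zero_mul] at hmul
    omega
  rw [le_inv_mul_iff₀ hε, hf]
  exact hεgh g h (hmul ▸ Nat.le_mul_of_pos_right _ hh_pos) (hmul ▸ Nat.le_mul_of_pos_left _ hg_pos)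
    h0 hh
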